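/- arXiv:2211.15840 — 4 statements merged into one kernel-verified Lean document; each statement's English description precedes it below -/
import Mathlib

section
/- For every integer q ≥ 2 and all integers t_1 ≥ … ≥ t_q ≥ 3, there exists a graph G containing no subgraph isomorphic to K_{t_1+1} such that G is q-Ramsey for (K_{t_1},…,K_{t_q}). -/
set_option linter.unusedSectionVars false
set_option linter.unreachableTactic false
set_option linter.unusedTactic false
set_option maxHeartbeats 1000000


open SimpleGraph Finset Function Combinatorics

namespace RamseyGadgets


/-- Multicolor asymmetric Ramsey theorem. -/
theorem ramsey_exists (q : ℕ) (hq : 0 < q) (t : Fin q → ℕ) :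
    ∃ N : ℕ, ∀ (α : Type) [DecidableEq α] (W : Finset α) (χ : α → α → Fin q),
      N ≤ W.card → (∀ a b, χ a b = χ b a) →
      ∃ i : Fin q, ∃ S : Finset α, S ⊆ W ∧ S.card = t i ∧
        ∀ u ∈ S, ∀ v ∈ S, u ≠ v → χ u v = i := by
  generalize hs : (∑ i, t i) = M
  induction M using Nat.strong_induction_on generalizing t with
  | _ M IH =>
  by_cases h1 : ∃ i, t i ≤ 1
  · obtain ⟨i, hi⟩ := h1
    refine ⟨1, fun α _ W χ hW hsym => ?_⟩
    interval_cases h : t i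
    · exact ⟨i, ∅, by simp [h]⟩
    · obtain ⟨v, hv⟩ := Finset.card_pos.mp (lt_of_lt_of_le one_pos hW)
      exact ⟨i, {v}, by simpa using hv, by simp [h], by simp +contextual⟩
  · push_neg at h1
    have h2 : ∀ i, 2 ≤ t i := fun i => h1 i
    have IH' : ∀ i : Fin q, ∃ N : ℕ, ∀ (α : Type) [DecidableEq α] (W : Finset α)
        (χ : α → α → Fin q), N ≤ W.card → (∀ a b, χ a b = χ b a) →
        ∃ j : Fin q, ∃ S : Finset α, S ⊆ W ∧ S.card = Function.update t i (t i - 1) j ∧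
          ∀ u ∈ S, ∀ v ∈ S, u ≠ v → χ u v = j := by
      intro i
      refine IH (∑ j, Function.update t i (t i - 1) j) ?_ _ rfl
      subst hs
      refine Finset.sum_lt_sum (fun j _ => ?_) ⟨i, Finset.mem_univ i, ?_⟩
      · by_cases hji : j = i
        · subst hji; simp only [Function.update_self]; omega
        · simp [Function.update_of_ne hji]
      · simp only [Function.update_self]; have := h2 i; omega
    choose Nf hNf using IH'
    refine ⟨1 + ∑ i, Nf i, fun α _ W χ hW hsym => ?_⟩
    have hWpos : 0 < W.card := by omega
    obtain ⟨v, hv⟩ := Finset.card_pos.mp hWpos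
    set W' := W.erase v with hW'
    have hcard' : ∑ i, Nf i ≤ W'.card := by
      rw [hW', Finset.card_erase_of_mem hv]; omega
    have hfib : W'.card = ∑ i : Fin q, (W'.filter fun u => χ v u = i).card :=
      Finset.card_eq_sum_card_fiberwise (fun x _ => Finset.mem_univ _)
    have : ∃ i : Fin q, Nf i ≤ (W'.filter fun u => χ v u = i).card := by
      by_contra hcon
      push_neg at hcon
      have : ∑ i : Fin q, (W'.filter fun u => χ v u = i).card < ∑ i, Nf i :=
        Finset.sum_lt_sum_of_nonempty ⟨⟨0, hq⟩, Finset.mem_univ _⟩ (fun i _ => hcon i)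
      omega
    obtain ⟨i, hi⟩ := this
    obtain ⟨j, S, hSsub, hScard, hSmono⟩ :=
      hNf i α (W'.filter fun u => χ v u = i) χ hi hsym
    by_cases hji : j = i
    · subst hji
      refine ⟨j, insert v S, ?_, ?_, ?_⟩
      · intro x hx
        rcases Finset.mem_insert.mp hx with h | h
        · exact h ▸ hv
        · exact Finset.erase_subset _ _ (Finset.filter_subset _ _ (hSsub h))
      · have hvS : v ∉ S := fun h => by
          have := Finset.mem_erase.mp (Finset.filter_subset _ _ (hSsub h))
          exact this.1 rfl
        rw [Finset.card_insert_of_notMem hvS, hScard, Function.update_self]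
        have := h2 j; omega
      · intro u hu w hw huw
        rcases Finset.mem_insert.mp hu with h | h <;>
          rcases Finset.mem_insert.mp hw with h' | h'
        · exact absurd (h.trans h'.symm) huw
        · subst h; exact (Finset.mem_filter.mp (hSsub h')).2
        · subst h'; rw [hsym]; exact (Finset.mem_filter.mp (hSsub h)).2
        · exact hSmono u h w h' huw
    · refine ⟨j, S, ?_, ?_, hSmono⟩
      · exact fun x hx => Finset.erase_subset _ _ (Finset.filter_subset _ _ (hSsub hx))
      · rwa [Function.update_of_ne hji] at hScard


structure PartG (N : ℕ) : Type 1 where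
  V : Type
  fin : Finite V
  G : SimpleGraph V
  part : V → Fin N
  partite : ∀ ⦃u v : V⦄, G.Adj u v → part u ≠ part v

attribute [instance] PartG.fin

/-- Part-preserving graph embeddings. -/
structure PEmb {N : ℕ} (P Q : PartG N) where
  f : P.V → Q.V
  inj : Function.Injective f
  adjMap : ∀ ⦃u v : P.V⦄, P.G.Adj u v → Q.G.Adj (f u) (f v)
  partMap : ∀ v, Q.part (f v) = P.part v

def PEmb.id {N : ℕ} (P : PartG N) : PEmb P P :=
  ⟨_root_.id, injective_id, fun _ _ h => h, fun _ => rfl⟩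

def PEmb.comp {N : ℕ} {P Q R : PartG N} (g : PEmb Q R) (e : PEmb P Q) : PEmb P R :=
  ⟨g.f ∘ e.f, g.inj.comp e.inj, fun _ _ h => g.adjMap (e.adjMap h),
    fun v => (g.partMap _).trans (e.partMap v)⟩

section Base

variable (N t0 : ℕ)

def baseV := {x : Finset (Fin N) × Fin N // x.1.card = t0 ∧ x.2 ∈ x.1}

instance : Finite (baseV N t0) := by unfold baseV; infer_instance

def base : PartG N where
  V := baseV N t0
  fin := inferInstance
  G := SimpleGraph.fromRel (fun x y => x.1.1 = y.1.1)
  part := fun x => x.1.2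
  partite := by
    rintro u v h hp
    rw [SimpleGraph.fromRel_adj] at h
    obtain ⟨hne, h | h⟩ := h
    · exact hne (Subtype.ext (Prod.ext h hp))
    · exact hne (Subtype.ext (Prod.ext h.symm hp))

lemma base_adj {x y : (base N t0).V} :
    (base N t0).G.Adj x y ↔ x ≠ y ∧ x.1.1 = y.1.1 := by
  show (SimpleGraph.fromRel _).Adj x y ↔ _
  erw [SimpleGraph.fromRel_adj]
  constructor
  · rintro ⟨hne, h | h⟩
    · exact ⟨hne, h⟩
    · exact ⟨hne, h.symm⟩
  · rintro ⟨hne, h⟩; exact ⟨hne, Or.inl h⟩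

lemma base_part (x : (base N t0).V) : (base N t0).part x = x.1.2 := rfl

lemma base_cliqueFree : (base N t0).G.CliqueFree (t0 + 1) := by
  intro s hs
  obtain ⟨x, hx⟩ := Finset.card_pos.mp (by rw [hs.2]; omega)
  have hsub : ∀ y ∈ s, y.1.2 ∈ x.1.1 := by
    intro y hy
    by_cases hxy : y = x
    · subst hxy; exact y.2.2
    · have := hs.1 hy hx hxy
      rw [base_adj] at this
      exact this.2 ▸ y.2.2
  have hinj : Set.InjOn (fun y : (base N t0).V => y.1.2) ↑s := by
    intro y hy z hz hyz
    by_contra hne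
    have hadj := hs.1 hy hz hne
    rw [base_adj] at hadj
    exact hadj.1 (Subtype.ext (Prod.ext hadj.2 hyz))
  have := Finset.card_le_card_of_injOn (fun y : (base N t0).V => y.1.2) hsub hinj
  rw [hs.2, x.2.1] at this
  omega

end Base

section Step

variable {N : ℕ} (P : PartG N) (a b : Fin N)

/-- The alphabet: edges between parts `a` and `b`. -/
def Sig := {e : {v : P.V // P.part v = a} × {v : P.V // P.part v = b} // P.G.Adj e.1.1 e.2.1}

instance : Finite (Sig P a b) := by unfold Sig; infer_instance

variable (ι : Type) [Fintype ι] [Nonempty ι]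

/-- Side-respecting induced copies of the bipartite graph between parts `a`, `b`
in its `ι`-th power. -/
def Jset :=
  {p : ({v : P.V // P.part v = a} → ι → {v : P.V // P.part v = a}) ×
       ({v : P.V // P.part v = b} → ι → {v : P.V // P.part v = b}) //
    Injective p.1 ∧ Injective p.2 ∧
    ∀ y₁ y₂, (∀ c : ι, P.G.Adj (p.1 y₁ c).1 (p.2 y₂ c).1) ↔ P.G.Adj y₁.1 y₂.1}

instance : Finite (Jset P a b ι) := by unfold Jset; infer_instance

def stepV := ((ι → {v : P.V // P.part v = a}) ⊕ (ι → {v : P.V // P.part v = b}))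
    ⊕ (Jset P a b ι × {v : P.V // P.part v ≠ a ∧ P.part v ≠ b})

instance : Finite (stepV P a b ι) := by unfold stepV; infer_instance

def stepRel : stepV P a b ι → stepV P a b ι → Prop
  | Sum.inl (Sum.inl f), Sum.inl (Sum.inr g) => ∀ c, P.G.Adj (f c).1 (g c).1
  | Sum.inl (Sum.inl f), Sum.inr jw => ∃ y₁, f = jw.1.1.1 y₁ ∧ P.G.Adj y₁.1 jw.2.1
  | Sum.inl (Sum.inr g), Sum.inr jw => ∃ y₂, g = jw.1.1.2 y₂ ∧ P.G.Adj y₂.1 jw.2.1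
  | Sum.inr jw, Sum.inr jw' => jw.1 = jw'.1 ∧ P.G.Adj jw.2.1 jw'.2.1
  | _, _ => False

def stepPart : stepV P a b ι → Fin N
  | Sum.inl (Sum.inl _) => a
  | Sum.inl (Sum.inr _) => b
  | Sum.inr jw => P.part jw.2.1

lemma stepRel_part_ne {u v : stepV P a b ι} (h : stepRel P a b ι u v) :
    stepPart P a b ι u ≠ stepPart P a b ι v := by
  obtain ⟨c₀⟩ := ‹Nonempty ι›
  rcases u with (f | g) | ⟨j, w⟩ <;> rcases v with (f' | g') | ⟨j', w'⟩
  · exact h.elim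
  · intro hab
    exact P.partite (h c₀) ((f c₀).2.trans (hab.trans ((g' c₀).2.symm)))
  · obtain ⟨y₁, -, hadj⟩ := h
    intro hab
    exact P.partite hadj (y₁.2.trans hab)
  · exact h.elim
  · exact h.elim
  · obtain ⟨y₂, -, hadj⟩ := h
    intro hab
    exact P.partite hadj (y₂.2.trans hab)
  · exact h.elim
  · exact h.elim
  · exact P.partite h.2

def stepP : PartG N where
  V := stepV P a b ι
  fin := inferInstance
  G := SimpleGraph.fromRel (stepRel P a b ι)
  part := stepPart P a b ι
  partite := by
    rintro u v h
    rw [SimpleGraph.fromRel_adj] at h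
    obtain ⟨hne, h | h⟩ := h
    · exact stepRel_part_ne P a b ι h
    · exact (stepRel_part_ne P a b ι h).symm

lemma stepP_adj {u v : stepV P a b ι} :
    (stepP P a b ι).G.Adj u v ↔ u ≠ v ∧ (stepRel P a b ι u v ∨ stepRel P a b ι v u) :=
  SimpleGraph.fromRel_adj _ _ _

-- adjacency characterizations
lemma adj_ll_lr {f : ι → {v : P.V // P.part v = a}} {g : ι → {v : P.V // P.part v = b}} :
    (stepP P a b ι).G.Adj (Sum.inl (Sum.inl f)) (Sum.inl (Sum.inr g)) ↔
      ∀ c, P.G.Adj (f c).1 (g c).1 := by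
  erw [stepP_adj]
  constructor
  · rintro ⟨-, h | h⟩
    · exact h
    · exact h.elim
  · intro h
    exact ⟨by intro hc; injection hc with h'; injection h', Or.inl h⟩

lemma adj_ll_r {f : ι → {v : P.V // P.part v = a}}
    {jw : Jset P a b ι × {v : P.V // P.part v ≠ a ∧ P.part v ≠ b}} :
    (stepP P a b ι).G.Adj (Sum.inl (Sum.inl f)) (Sum.inr jw) ↔
      ∃ y₁, f = jw.1.1.1 y₁ ∧ P.G.Adj y₁.1 jw.2.1 := by
  erw [stepP_adj]
  constructor
  · rintro ⟨-, h | h⟩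
    · exact h
    · exact h.elim
  · intro h
    exact ⟨by intro hc; injection hc, Or.inl h⟩

lemma adj_lr_r {g : ι → {v : P.V // P.part v = b}}
    {jw : Jset P a b ι × {v : P.V // P.part v ≠ a ∧ P.part v ≠ b}} :
    (stepP P a b ι).G.Adj (Sum.inl (Sum.inr g)) (Sum.inr jw) ↔
      ∃ y₂, g = jw.1.1.2 y₂ ∧ P.G.Adj y₂.1 jw.2.1 := by
  erw [stepP_adj]
  constructor
  · rintro ⟨-, h | h⟩
    · exact h
    · exact h.elim
  · intro h
    exact ⟨by intro hc; injection hc, Or.inl h⟩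

lemma adj_r_r {jw jw' : Jset P a b ι × {v : P.V // P.part v ≠ a ∧ P.part v ≠ b}} :
    (stepP P a b ι).G.Adj (Sum.inr jw) (Sum.inr jw') ↔
      jw.1 = jw'.1 ∧ P.G.Adj jw.2.1 jw'.2.1 := by
  erw [stepP_adj]
  constructor
  · rintro ⟨-, h | h⟩
    · exact h
    · exact ⟨h.1.symm, h.2.symm⟩
  · rintro ⟨h1, h2⟩
    refine ⟨?_, Or.inl ⟨h1, h2⟩⟩
    intro hc
    injection hc with h'
    rw [h'] at h2
    exact P.G.loopless.irrefl _ h2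

lemma not_adj_ll_ll {f f' : ι → {v : P.V // P.part v = a}} :
    ¬ (stepP P a b ι).G.Adj (Sum.inl (Sum.inl f)) (Sum.inl (Sum.inl f')) := by
  erw [stepP_adj]
  rintro ⟨-, h | h⟩ <;> exact h

lemma not_adj_lr_lr {g g' : ι → {v : P.V // P.part v = b}} :
    ¬ (stepP P a b ι).G.Adj (Sum.inl (Sum.inr g)) (Sum.inl (Sum.inr g')) := by
  erw [stepP_adj]
  rintro ⟨-, h | h⟩ <;> exact h

def stepEmbF (j : Jset P a b ι) : P.V → (stepP P a b ι).V := fun v =>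
  if h : P.part v = a then Sum.inl (Sum.inl (j.1.1 ⟨v, h⟩))
  else if h' : P.part v = b then Sum.inl (Sum.inr (j.1.2 ⟨v, h'⟩))
  else Sum.inr (j, ⟨v, h, h'⟩)

lemma stepEmbF_a {j : Jset P a b ι} {v : P.V} (h : P.part v = a) :
    stepEmbF P a b ι j v = Sum.inl (Sum.inl (j.1.1 ⟨v, h⟩)) := dif_pos h

lemma stepEmbF_b {j : Jset P a b ι} {v : P.V} (h : ¬ P.part v = a) (h' : P.part v = b) :
    stepEmbF P a b ι j v = Sum.inl (Sum.inr (j.1.2 ⟨v, h'⟩)) := by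
  erw [stepEmbF, dif_neg h, dif_pos h']

lemma stepEmbF_r {j : Jset P a b ι} {v : P.V} (h : ¬ P.part v = a) (h' : ¬ P.part v = b) :
    stepEmbF P a b ι j v = Sum.inr (j, ⟨v, h, h'⟩) := by
  erw [stepEmbF, dif_neg h, dif_neg h']

lemma stepEmbF_adj (j : Jset P a b ι) (u v : P.V) :
    (stepP P a b ι).G.Adj (stepEmbF P a b ι j u) (stepEmbF P a b ι j v) ↔ P.G.Adj u v := by
  obtain ⟨⟨j1, j2⟩, hj1, hj2, hjiff⟩ := j
  by_cases hu1 : P.part u = a <;> by_cases hv1 : P.part v = a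
  · erw [stepEmbF_a P a b ι hu1, stepEmbF_a P a b ι hv1]
    constructor
    · intro h; exact absurd h (not_adj_ll_ll P a b ι)
    · intro h; exact absurd (hu1.trans hv1.symm) (P.partite h)
  · by_cases hv2 : P.part v = b
    · erw [stepEmbF_a P a b ι hu1, stepEmbF_b P a b ι hv1 hv2, adj_ll_lr]
      exact hjiff ⟨u, hu1⟩ ⟨v, hv2⟩
    · erw [stepEmbF_a P a b ι hu1, stepEmbF_r P a b ι hv1 hv2, adj_ll_r]
      constructor
      · rintro ⟨y₁, hy, hadj⟩
        have : y₁ = ⟨u, hu1⟩ := hj1 hy.symm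
        subst this; exact hadj
      · intro h; exact ⟨⟨u, hu1⟩, rfl, h⟩
  · by_cases hu2 : P.part u = b
    · erw [stepEmbF_b P a b ι hu1 hu2, stepEmbF_a P a b ι hv1, SimpleGraph.adj_comm, adj_ll_lr,
        P.G.adj_comm]
      exact hjiff ⟨v, hv1⟩ ⟨u, hu2⟩
    · erw [stepEmbF_r P a b ι hu1 hu2, stepEmbF_a P a b ι hv1, SimpleGraph.adj_comm, adj_ll_r,
        P.G.adj_comm]
      constructor
      · rintro ⟨y₁, hy, hadj⟩
        have : y₁ = ⟨v, hv1⟩ := hj1 hy.symm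
        subst this
        first
        | exact (by simpa using hadj)
        | exact (by simpa using hadj).symm
      · intro h
        first
        | exact ⟨⟨v, hv1⟩, rfl, by simpa using h⟩
        | exact ⟨⟨v, hv1⟩, rfl, by simpa using h.symm⟩
  · by_cases hu2 : P.part u = b <;> by_cases hv2 : P.part v = b
    · erw [stepEmbF_b P a b ι hu1 hu2, stepEmbF_b P a b ι hv1 hv2]
      constructor
      · intro h; exact absurd h (not_adj_lr_lr P a b ι)
      · intro h; exact absurd (hu2.trans hv2.symm) (P.partite h)
    · erw [stepEmbF_b P a b ι hu1 hu2, stepEmbF_r P a b ι hv1 hv2, adj_lr_r]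
      constructor
      · rintro ⟨y₂, hy, hadj⟩
        have : y₂ = ⟨u, hu2⟩ := hj2 hy.symm
        subst this; exact hadj
      · intro h; exact ⟨⟨u, hu2⟩, rfl, h⟩
    · erw [stepEmbF_r P a b ι hu1 hu2, stepEmbF_b P a b ι hv1 hv2, SimpleGraph.adj_comm, adj_lr_r,
        P.G.adj_comm]
      constructor
      · rintro ⟨y₂, hy, hadj⟩
        have : y₂ = ⟨v, hv2⟩ := hj2 hy.symm
        subst this
        first
        | exact (by simpa using hadj)
        | exact (by simpa using hadj).symm
      · intro h
        first
        | exact ⟨⟨v, hv2⟩, rfl, by simpa using h⟩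
        | exact ⟨⟨v, hv2⟩, rfl, by simpa using h.symm⟩
    · erw [stepEmbF_r P a b ι hu1 hu2, stepEmbF_r P a b ι hv1 hv2, adj_r_r]
      constructor
      · rintro ⟨-, h⟩; exact h
      · intro h; exact ⟨rfl, h⟩

lemma stepEmbF_inj (j : Jset P a b ι) : Function.Injective (stepEmbF P a b ι j) := by
  intro u v huv
  by_cases hu1 : P.part u = a <;> by_cases hv1 : P.part v = a
  · rw [stepEmbF_a P a b ι hu1, stepEmbF_a P a b ι hv1] at huv
    injection huv with h; injection h with h
    exact congrArg Subtype.val (j.2.1 h)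
  · by_cases hv2 : P.part v = b
    · rw [stepEmbF_a P a b ι hu1, stepEmbF_b P a b ι hv1 hv2] at huv
      injection huv with h; injection h
    · rw [stepEmbF_a P a b ι hu1, stepEmbF_r P a b ι hv1 hv2] at huv
      injection huv
  · by_cases hu2 : P.part u = b
    · rw [stepEmbF_b P a b ι hu1 hu2, stepEmbF_a P a b ι hv1] at huv
      injection huv with h; injection h
    · rw [stepEmbF_r P a b ι hu1 hu2, stepEmbF_a P a b ι hv1] at huv
      injection huv
  · by_cases hu2 : P.part u = b <;> by_cases hv2 : P.part v = b
    · rw [stepEmbF_b P a b ι hu1 hu2, stepEmbF_b P a b ι hv1 hv2] at huv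
      injection huv with h; injection h with h
      exact congrArg Subtype.val (j.2.2.1 h)
    · rw [stepEmbF_b P a b ι hu1 hu2, stepEmbF_r P a b ι hv1 hv2] at huv
      injection huv
    · rw [stepEmbF_r P a b ι hu1 hu2, stepEmbF_b P a b ι hv1 hv2] at huv
      injection huv
    · rw [stepEmbF_r P a b ι hu1 hu2, stepEmbF_r P a b ι hv1 hv2] at huv
      injection huv with h
      injection h with h1 h2
      exact congrArg Subtype.val h2

lemma stepEmbF_part (j : Jset P a b ι) (v : P.V) :
    (stepP P a b ι).part (stepEmbF P a b ι j v) = P.part v := by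
  by_cases hu1 : P.part v = a
  · rw [stepEmbF_a P a b ι hu1]; exact hu1.symm
  · by_cases hu2 : P.part v = b
    · rw [stepEmbF_b P a b ι hu1 hu2]; exact hu2.symm
    · rw [stepEmbF_r P a b ι hu1 hu2]; rfl

lemma step_cliqueFree (hab : a ≠ b) {m : ℕ} (hm : 3 ≤ m) (h : P.G.CliqueFree m) :
    (stepP P a b ι).G.CliqueFree m := by
  intro s hs
  classical
  by_cases hr : ∃ x ∈ s, ∃ jw, x = Sum.inr jw
  · obtain ⟨x, hx, jw, rfl⟩ := hr
    -- every vertex of s lies in the image of stepEmbF jw.1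
    have hrange : ∀ y ∈ s, ∃ u : P.V, stepEmbF P a b ι jw.1 u = y := by
      intro y hy
      by_cases hyx : y = Sum.inr jw
      · refine ⟨jw.2.1, ?_⟩
        rw [stepEmbF_r P a b ι jw.2.2.1 jw.2.2.2, hyx]
      · have hadj := hs.1 hy hx hyx
        rcases y with (f | g) | jw'
        · rw [adj_ll_r] at hadj
          obtain ⟨y₁, hy₁, -⟩ := hadj
          refine ⟨y₁.1, ?_⟩
          rw [stepEmbF_a P a b ι y₁.2, hy₁]
        · rw [adj_lr_r] at hadj
          obtain ⟨y₂, hy₂, -⟩ := hadj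
          refine ⟨y₂.1, ?_⟩
          have hy2a : ¬ P.part y₂.1 = a := fun hc => hab (hc.symm.trans y₂.2)
          rw [stepEmbF_b P a b ι hy2a y₂.2, hy₂]
        · rw [adj_r_r] at hadj
          refine ⟨jw'.2.1, ?_⟩
          rw [stepEmbF_r P a b ι jw'.2.2.1 jw'.2.2.2, ← hadj.1]
    -- pull the clique back
    have hfin : (stepEmbF P a b ι jw.1 ⁻¹' ↑s).Finite := Set.toFinite _
    set s' : Finset P.V := hfin.toFinset with hs'
    have himg : s'.image (stepEmbF P a b ι jw.1) = s := by
      apply Finset.Subset.antisymm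
      · intro y hy
        obtain ⟨u, hu, rfl⟩ := Finset.mem_image.mp hy
        have := (Set.Finite.mem_toFinset hfin).mp hu
        exact this
      · intro y hy
        obtain ⟨u, hu⟩ := hrange y hy
        refine Finset.mem_image.mpr ⟨u, ?_, hu⟩
        rw [hs', Set.Finite.mem_toFinset]
        simp only [Set.mem_preimage]
        rw [hu]
        exact Finset.mem_coe.mpr hy
    refine h s' ⟨?_, ?_⟩
    · intro u hu v hv huv
      have hadj : (stepP P a b ι).G.Adj (stepEmbF P a b ι jw.1 u) (stepEmbF P a b ι jw.1 v) := by
        apply hs.1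
        · rw [← himg]; exact Finset.mem_coe.mpr (Finset.mem_image_of_mem _ (Finset.mem_coe.mp hu))
        · rw [← himg]; exact Finset.mem_coe.mpr (Finset.mem_image_of_mem _ (Finset.mem_coe.mp hv))
        · exact fun hc => huv (stepEmbF_inj P a b ι jw.1 hc)
      exact (stepEmbF_adj P a b ι jw.1 u v).mp hadj
    · have := hs.2
      rw [← himg, Finset.card_image_of_injective _ (stepEmbF_inj P a b ι jw.1)] at this
      exact this
  · -- no inr vertices: the clique has at most two vertices
    have hr' : ∀ z ∈ s, ∀ jw0, z ≠ Sum.inr jw0 := fun z hz jw0 hEq => hr ⟨z, hz, jw0, hEq⟩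
    have : s.card ≤ 2 := by
      have hcard2 : s.card ≤ (Finset.univ : Finset Bool).card := by
        apply Finset.card_le_card_of_injOn
          (fun y => match y with | Sum.inl (Sum.inl _) => true | _ => false)
          (fun _ _ => Finset.mem_univ _)
        intro y hy z hz hyz
        by_contra hne
        have hadj := hs.1 hy hz hne
        have hy' := hr' y (Finset.mem_coe.mp hy)
        have hz' := hr' z (Finset.mem_coe.mp hz)
        rcases y with (f | g) | jw
        · rcases z with (f' | g') | jw'
          · exact not_adj_ll_ll P a b ι hadj
          · simp at hyz
          · exact hz' jw' rfl
        · rcases z with (f' | g') | jw'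
          · simp at hyz
          · exact not_adj_lr_lr P a b ι hadj
          · exact hz' jw' rfl
        · exact hy' jw rfl
      simpa using hcard2
    rw [hs.2] at this
    omega

lemma step_mono {q : ℕ}
    (hHJ : ∀ C : (ι → Sig P a b) → Fin q, ∃ l : Combinatorics.Line (Sig P a b) ι, l.IsMono C)
    (ψ : Sym2 (stepP P a b ι).V → Fin q) :
    ∃ (j : Jset P a b ι) (c : Fin q), ∀ (u v : P.V) (hu : P.part u = a) (hv : P.part v = b),
      P.G.Adj u v →
      ψ s(Sum.inl (Sum.inl (j.1.1 ⟨u, hu⟩)), Sum.inl (Sum.inr (j.1.2 ⟨v, hv⟩))) = c := by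
  classical
  obtain ⟨l, c₀, hl⟩ := hHJ (fun z =>
    ψ s(Sum.inl (Sum.inl (fun c => (z c).1.1)), Sum.inl (Sum.inr (fun c => (z c).1.2))))
  obtain ⟨i₀, hi₀⟩ := l.proper
  set ι₁ : {v : P.V // P.part v = a} → ι → {v : P.V // P.part v = a} := fun y c =>
    ((l.idxFun c).map (fun σ => σ.1.1)).getD y with hι₁
  set ι₂ : {v : P.V // P.part v = b} → ι → {v : P.V // P.part v = b} := fun y c =>
    ((l.idxFun c).map (fun σ => σ.1.2)).getD y with hι₂
  have h1 : Injective ι₁ := by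
    intro y y' h
    have := congrFun h i₀
    simpa [hι₁, hi₀] using this
  have h2 : Injective ι₂ := by
    intro y y' h
    have := congrFun h i₀
    simpa [hι₂, hi₀] using this
  have hIff : ∀ y₁ y₂, (∀ c : ι, P.G.Adj (ι₁ y₁ c).1 (ι₂ y₂ c).1) ↔ P.G.Adj y₁.1 y₂.1 := by
    intro y₁ y₂
    constructor
    · intro h
      have := h i₀
      simpa [hι₁, hι₂, hi₀] using this
    · intro h c
      cases hc : l.idxFun c with
      | none => simpa [hι₁, hι₂, hc] using h
      | some σ => simpa [hι₁, hι₂, hc] using σ.2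
  refine ⟨⟨(ι₁, ι₂), h1, h2, hIff⟩, c₀, ?_⟩
  intro u v hu hv hadj
  have key := hl (⟨(⟨u, hu⟩, ⟨v, hv⟩), hadj⟩ : Sig P a b)
  have e1 : (fun c => ((l (⟨(⟨u, hu⟩, ⟨v, hv⟩), hadj⟩ : Sig P a b)) c).1.1) = ι₁ ⟨u, hu⟩ := by
    funext c
    cases hc : l.idxFun c with
    | none => simp [Combinatorics.Line.coe_apply, hc, hι₁]; exact congrArg (fun z : Sig P a b => z.1.1) (Combinatorics.Line.apply_none _ _ _ hc)
    | some σ => simp [Combinatorics.Line.coe_apply, hc, hι₁]; exact congrArg (fun z : Sig P a b => z.1.1) (Combinatorics.Line.apply_some hc)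
  have e2 : (fun c => ((l (⟨(⟨u, hu⟩, ⟨v, hv⟩), hadj⟩ : Sig P a b)) c).1.2) = ι₂ ⟨v, hv⟩ := by
    funext c
    cases hc : l.idxFun c with
    | none => simp [Combinatorics.Line.coe_apply, hc, hι₂]; exact congrArg (fun z : Sig P a b => z.1.2) (Combinatorics.Line.apply_none _ _ _ hc)
    | some σ => simp [Combinatorics.Line.coe_apply, hc, hι₂]; exact congrArg (fun z : Sig P a b => z.1.2) (Combinatorics.Line.apply_some hc)
  have key' : ψ s(Sum.inl (Sum.inl (fun c =>
        ((l (⟨(⟨u, hu⟩, ⟨v, hv⟩), hadj⟩ : Sig P a b)) c).1.1)),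
      Sum.inl (Sum.inr (fun c =>
        ((l (⟨(⟨u, hu⟩, ⟨v, hv⟩), hadj⟩ : Sig P a b)) c).1.2))) = c₀ := key
  rw [e1, e2] at key'
  exact key'

end Step

section Build

open Combinatorics

variable {q : ℕ}

def HJgood (q : ℕ) (α : Type) (ι : Type) [Fintype ι] : Prop :=
  ∀ C : (ι → α) → Fin q, ∃ l : Line α ι, l.IsMono C

lemma packEx (hq : 0 < q) (α : Type) [Finite α] :
    ∃ (ι : Type) (fι : Fintype ι), Nonempty ι ∧ @HJgood q α ι fι := by
  obtain ⟨ι, fι, h⟩ := Line.exists_mono_in_high_dimension α (Fin q)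
  obtain ⟨l, -⟩ := h (fun _ => ⟨0, hq⟩)
  obtain ⟨i₀, -⟩ := l.proper
  exact ⟨ι, fι, ⟨i₀⟩, h⟩

noncomputable def pick (hq : 0 < q) {N : ℕ} (P : PartG N) (a b : Fin N) :
    Σ' (ι : Type) (fι : Fintype ι), Nonempty ι ∧ @HJgood q (Sig P a b) ι fι :=
  Classical.choice (by
    obtain ⟨ι, fι, hne, hh⟩ := packEx hq (Sig P a b)
    exact ⟨⟨ι, fι, hne, hh⟩⟩)

noncomputable def stepFull (hq : 0 < q) {N : ℕ} (P : PartG N) (a b : Fin N) : PartG N :=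
  @stepP N P a b (pick hq P a b).1 (pick hq P a b).2.1 (pick hq P a b).2.2.1

lemma stepFull_cliqueFree (hq : 0 < q) {N : ℕ} (P : PartG N) (a b : Fin N) (hab : a ≠ b)
    {m : ℕ} (hm : 3 ≤ m) (h : P.G.CliqueFree m) : (stepFull hq P a b).G.CliqueFree m :=
  @step_cliqueFree N P a b (pick hq P a b).1 (pick hq P a b).2.1 (pick hq P a b).2.2.1 hab m hm h

lemma stepFull_mono (hq : 0 < q) {N : ℕ} (P : PartG N) (a b : Fin N)
    (ψ : Sym2 (stepFull hq P a b).V → Fin q) :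
    ∃ (e : PEmb P (stepFull hq P a b)) (c : Fin q),
      ∀ u v : P.V, P.G.Adj u v → P.part u = a → P.part v = b → ψ s(e.f u, e.f v) = c := by
  letI : Fintype (pick hq P a b).1 := (pick hq P a b).2.1
  letI : Nonempty (pick hq P a b).1 := (pick hq P a b).2.2.1
  obtain ⟨j, c, hmono⟩ := @step_mono N P a b (pick hq P a b).1 (pick hq P a b).2.1
    (pick hq P a b).2.2.1 q (pick hq P a b).2.2.2 ψ
  refine ⟨⟨stepEmbF P a b (pick hq P a b).1 j, stepEmbF_inj P a b (pick hq P a b).1 j,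
    fun u v h => (stepEmbF_adj P a b (pick hq P a b).1 j u v).mpr h,
    stepEmbF_part P a b (pick hq P a b).1 j⟩, c, ?_⟩
  intro u v hadj hu hv
  have hab : a ≠ b := fun h0 => P.partite hadj (hu.trans (h0.symm ▸ hv.symm))
  have hva : ¬ P.part v = a := fun hc => hab (hc.symm.trans hv)
  show ψ s(stepEmbF P a b (pick hq P a b).1 j u, stepEmbF P a b (pick hq P a b).1 j v) = c
  rw [stepEmbF_a P a b (pick hq P a b).1 hu, stepEmbF_b P a b (pick hq P a b).1 hva hv]
  exact hmono u v hu hv hadj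

noncomputable def build (hq : 0 < q) (N t0 : ℕ) : List (Fin N × Fin N) → PartG N
  | [] => base N t0
  | ab :: L => stepFull hq (build hq N t0 L) ab.1 ab.2

lemma build_cliqueFree (hq : 0 < q) (N t0 : ℕ) (h2 : 2 ≤ t0) (L : List (Fin N × Fin N))
    (hL : ∀ ab ∈ L, ab.1 ≠ ab.2) : (build hq N t0 L).G.CliqueFree (t0 + 1) := by
  induction L with
  | nil => exact base_cliqueFree N t0
  | cons ab L ih =>
    exact stepFull_cliqueFree hq _ _ _ (hL ab List.mem_cons_self) (by omega)
      (ih fun x hx => hL x (List.mem_cons_of_mem _ hx))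

lemma build_mono (hq : 0 < q) (N t0 : ℕ) (L : List (Fin N × Fin N)) :
    ∀ ψ : Sym2 (build hq N t0 L).V → Fin q,
    ∃ e : PEmb (base N t0) (build hq N t0 L),
      ∀ ab ∈ L, ∃ c : Fin q, ∀ u v : (base N t0).V,
        (base N t0).G.Adj u v → (base N t0).part u = ab.1 → (base N t0).part v = ab.2 →
          ψ s(e.f u, e.f v) = c := by
  induction L with
  | nil => exact fun ψ => ⟨PEmb.id _, by simp⟩
  | cons ab L ih =>
    intro ψ
    obtain ⟨g, c, hg⟩ := stepFull_mono hq (build hq N t0 L) ab.1 ab.2 ψ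
    obtain ⟨e, he⟩ := ih (fun z => ψ (Sym2.map g.f z))
    refine ⟨g.comp e, ?_⟩
    intro ab' hab'
    rcases List.mem_cons.mp hab' with h | h
    · subst h
      refine ⟨c, fun u v hadj hu hv => ?_⟩
      exact hg (e.f u) (e.f v) (e.adjMap hadj) ((e.partMap u).trans hu)
        ((e.partMap v).trans hv)
    · obtain ⟨c', hc'⟩ := he ab' h
      refine ⟨c', fun u v hadj hu hv => ?_⟩
      have := hc' u v hadj hu hv
      erw [Sym2.map_pair_eq] at this; exact this

end Build

variable {q : ℕ}

/-- The graph consisting of the edges of `G` receiving color `i` under `φ`. -/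
def colorSub (G : SimpleGraph ℕ) (φ : Sym2 ℕ → Fin q) (i : Fin q) : SimpleGraph ℕ :=
  SimpleGraph.fromEdgeSet {e | e ∈ G.edgeSet ∧ φ e = i}

/-- `φ` is a `(K_{t 0}, …, K_{t (q-1)})`-free coloring of `G`: for every color `i`, the
edges of color `i` span no clique on `t i` vertices. -/
def FreeColoring (t : Fin q → ℕ) (G : SimpleGraph ℕ) (φ : Sym2 ℕ → Fin q) : Prop :=
  ∀ i : Fin q, (colorSub G φ i).CliqueFree (t i)

/-- `G` is `q`-Ramsey for the tuple of cliques `(K_{t 0}, …, K_{t (q-1)})`. -/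
def IsRamsey (t : Fin q → ℕ) (G : SimpleGraph ℕ) : Prop :=
  ∀ φ : Sym2 ℕ → Fin q, ¬ FreeColoring t G φ

/-- `G` is `q`-Ramsey-minimal for the tuple of cliques `(K_{t 0}, …, K_{t (q-1)})`. -/
def RamseyMinimal (t : Fin q → ℕ) (G : SimpleGraph ℕ) : Prop :=
  IsRamsey t G ∧ ∀ G' : SimpleGraph ℕ, G' < G → ¬ IsRamsey t G'

/-- `ι` realizes an attachment of a gadget `R`, with signal edge `e`, to the edge `f` of `G`:
the copy of `R` under `ι` meets `G` exactly in the edge `f`, with which `e` is identified. -/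
def IsAttachment (R : SimpleGraph ℕ) (e : Sym2 ℕ) (G : SimpleGraph ℕ) (f : Sym2 ℕ)
    (ι : ℕ ↪ ℕ) : Prop :=
  f ∈ G.edgeSet ∧ Sym2.map ι e = f ∧ ∀ v ∈ R.support, v ∉ e → ι v ∉ G.support

/-- `ι` realizes a joining of the edges `a` and `b` of `G` by `S` (with signal edges `e`, `f`). -/
def IsJoining (S : SimpleGraph ℕ) (e f : Sym2 ℕ) (G : SimpleGraph ℕ) (a b : Sym2 ℕ)
    (ι : ℕ ↪ ℕ) : Prop :=
  a ∈ G.edgeSet ∧ b ∈ G.edgeSet ∧ Sym2.map ι e = a ∧ Sym2.map ι f = b ∧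
    ∀ v ∈ S.support, v ∉ e → v ∉ f → ι v ∉ G.support

/-- `ψ` extends `φ` along the embedded copy of `R` given by `ι`. -/
def ExtendsOn (R : SimpleGraph ℕ) (ι : ℕ ↪ ℕ) (φ ψ : Sym2 ℕ → Fin q) : Prop :=
  ∀ e' ∈ R.edgeSet, ψ (Sym2.map ι e') = φ e'

/-- An `X`-determiner for the tuple `(K_{t 0}, …, K_{t (q-1)})` with signal edge `e`. -/
structure IsDeterminer (t : Fin q → ℕ) (X : Set (Fin q)) (R : SimpleGraph ℕ) (e : Sym2 ℕ) :
    Prop where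
  finite : R.edgeSet.Finite
  edge_mem : e ∈ R.edgeSet
  not_ramsey : ¬ IsRamsey t R
  color_mem : ∀ φ : Sym2 ℕ → Fin q, FreeColoring t R φ → φ e ∈ X
  exists_color : ∀ c ∈ X, ∃ φ : Sym2 ℕ → Fin q, FreeColoring t R φ ∧ φ e = c

/-- A safe `X`-determiner for the tuple `(K_{t 0}, …, K_{t (q-1)})` with signal edge `e`. -/
structure IsSafeDeterminer (t : Fin q → ℕ) (X : Set (Fin q)) (R : SimpleGraph ℕ) (e : Sym2 ℕ) :
    Prop where
  finite : R.edgeSet.Finite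
  edge_mem : e ∈ R.edgeSet
  not_ramsey : ¬ IsRamsey t R
  color_mem : ∀ φ : Sym2 ℕ → Fin q, FreeColoring t R φ → φ e ∈ X
  safe : ∀ c ∈ X, ∃ φ : Sym2 ℕ → Fin q, FreeColoring t R φ ∧ φ e = c ∧
    ∀ G : SimpleGraph ℕ, G.edgeSet.Finite → ∀ (f : Sym2 ℕ) (ι : ℕ ↪ ℕ),
      IsAttachment R e G f ι → ∀ ψ : Sym2 ℕ → Fin q, ExtendsOn R ι φ ψ →
        (FreeColoring t (G ⊔ R.map ι) ψ ↔ FreeColoring t G ψ)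

/-- An `X`-sender for the tuple `(K_{t 0}, …, K_{t (q-1)})` with signal edges `e` and `f`;
it is positive if `pos = true` and negative if `pos = false`. -/
structure IsSender (t : Fin q → ℕ) (pos : Bool) (X : Set (Fin q)) (S : SimpleGraph ℕ)
    (e f : Sym2 ℕ) : Prop where
  finite : S.edgeSet.Finite
  edge_e : e ∈ S.edgeSet
  edge_f : f ∈ S.edgeSet
  ne : e ≠ f
  not_ramsey : ¬ IsRamsey t S
  color_mem : ∀ φ : Sym2 ℕ → Fin q, FreeColoring t S φ →
    φ e ∈ X ∧ φ f ∈ X ∧ (if pos then φ e = φ f else φ e ≠ φ f)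
  exists_color : ∀ c₁ c₂ : Fin q, c₁ ∈ X → c₂ ∈ X → (if pos then c₁ = c₂ else c₁ ≠ c₂) →
    ∃ φ : Sym2 ℕ → Fin q, FreeColoring t S φ ∧ φ e = c₁ ∧ φ f = c₂

/-- A safe `X`-sender for the tuple `(K_{t 0}, …, K_{t (q-1)})` with signal edges `e` and `f`;
it is positive if `pos = true` and negative if `pos = false`. -/
structure IsSafeSender (t : Fin q → ℕ) (pos : Bool) (X : Set (Fin q)) (S : SimpleGraph ℕ)
    (e f : Sym2 ℕ) : Prop where
  finite : S.edgeSet.Finite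
  edge_e : e ∈ S.edgeSet
  edge_f : f ∈ S.edgeSet
  ne : e ≠ f
  not_ramsey : ¬ IsRamsey t S
  color_mem : ∀ φ : Sym2 ℕ → Fin q, FreeColoring t S φ →
    φ e ∈ X ∧ φ f ∈ X ∧ (if pos then φ e = φ f else φ e ≠ φ f)
  safe : ∀ c₁ c₂ : Fin q, c₁ ∈ X → c₂ ∈ X → (if pos then c₁ = c₂ else c₁ ≠ c₂) →
    ∃ φ : Sym2 ℕ → Fin q, FreeColoring t S φ ∧ φ e = c₁ ∧ φ f = c₂ ∧
      ∀ G : SimpleGraph ℕ, G.edgeSet.Finite → ∀ (a b : Sym2 ℕ) (ι : ℕ ↪ ℕ),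
        IsJoining S e f G a b ι → ∀ ψ : Sym2 ℕ → Fin q, ExtendsOn S ι φ ψ →
          (FreeColoring t (G ⊔ S.map ι) ψ ↔ FreeColoring t G ψ)

/-- A tuple of cliques `(K_{t 0}, …, K_{t (q-1)})` is distinguishable if, for every clique
size `m` represented in the tuple, there is a safe `X_m`-determiner, and, when `|X_m| > 1`,
safe positive and negative `X_m`-senders, where `X_m` is the set of colors `i` with `t i = m`. -/
def Distinguishable (t : Fin q → ℕ) : Prop :=
  ∀ m : ℕ, (∃ i, t i = m) →
    (∃ R e, IsSafeDeterminer t {i | t i = m} R e) ∧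
    (1 < {i : Fin q | t i = m}.ncard →
      (∃ S e f, IsSafeSender t true {i | t i = m} S e f) ∧
      (∃ S e f, IsSafeSender t false {i | t i = m} S e f))

/-- The minimum degree of a graph on `ℕ`, taken over the vertices that are not isolated. -/
noncomputable def minDegree (G : SimpleGraph ℕ) : ℕ :=
  sInf {d | ∃ v ∈ G.support, (G.neighborSet v).ncard = d}

/-- The smallest minimum degree of a `q`-Ramsey-minimal graph for
`(K_{t 0}, …, K_{t (q-1)})`. -/
noncomputable def sParam (t : Fin q → ℕ) : ℕ :=
  sInf {d | ∃ G : SimpleGraph ℕ, G.edgeSet.Finite ∧ RamseyMinimal t G ∧ minDegree G = d}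

/-- A color pattern witnessing the packing parameter. -/
def IsPackingPattern (t : Fin q → ℕ) {n : ℕ} (G : Fin q → SimpleGraph (Fin n)) : Prop :=
  (∀ i j, i ≠ j → Disjoint (G i).edgeSet (G j).edgeSet) ∧
  (∀ i, (G i).CliqueFree (t i + 1)) ∧
  (∀ lam : Fin n → Fin q, ∃ i, ∃ K : Finset (Fin n),
    (G i).IsNClique (t i) K ∧ ∀ v ∈ K, lam v = i)

/-- The packing parameter `P_q(t 0, …, t (q-1))`. -/
noncomputable def packing (t : Fin q → ℕ) : ℕ :=
  sInf {n | ∃ G : Fin q → SimpleGraph (Fin n), IsPackingPattern t G}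

/-- For every `q ≥ 2` and `t_1 ≥ … ≥ t_q ≥ 3` there exists a graph `G`
containing no copy of `K_{t_1 + 1}` that is `q`-Ramsey for `(K_{t_1}, …, K_{t_q})`. -/
theorem nesetril_rodl (q : ℕ) (hq : 2 ≤ q) (t : Fin q → ℕ)
    (hmono : Antitone t) (h3 : ∀ i, 3 ≤ t i) :
    ∃ G : SimpleGraph ℕ, G.edgeSet.Finite ∧
      G.CliqueFree (t ⟨0, by omega⟩ + 1) ∧ IsRamsey t G := by
  classical
  have hq0 : 0 < q := by omega
  set t0 := t ⟨0, by omega⟩ with ht0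
  have hti : ∀ i, t i ≤ t0 := fun i => hmono (by
    show (⟨0, by omega⟩ : Fin q) ≤ i
    simp [Fin.le_def])
  have ht03 : 3 ≤ t0 := h3 _
  obtain ⟨N₀, hN₀⟩ := ramsey_exists q hq0 t
  set N := max N₀ t0 with hN
  set L : List (Fin N × Fin N) :=
    ((Finset.univ : Finset (Fin N × Fin N)).filter (fun ab => ab.1 ≠ ab.2)).toList with hLdef
  have hLne : ∀ ab ∈ L, ab.1 ≠ ab.2 := by
    intro ab hab
    exact (Finset.mem_filter.mp (Finset.mem_toList.mp hab)).2
  have hLmem : ∀ a b : Fin N, a ≠ b → (a, b) ∈ L := by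
    intro a b hab
    rw [hLdef, Finset.mem_toList, Finset.mem_filter]
    exact ⟨Finset.mem_univ _, hab⟩
  set P := build hq0 N t0 L with hP
  obtain ⟨femb, hfembinj⟩ : ∃ f : P.V → ℕ, Function.Injective f :=
    (countable_iff_exists_injective P.V).mp inferInstance
  set fe : P.V ↪ ℕ := ⟨femb, hfembinj⟩ with hfe
  refine ⟨P.G.map fe, ?_, ?_, ?_⟩
  · -- finite edge set
    have hsub : (P.G.map fe).edgeSet ⊆ Sym2.map fe '' Set.univ := by
      intro z hz
      induction z using Sym2.ind with
      | _ x y =>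
        rw [SimpleGraph.mem_edgeSet, SimpleGraph.map_adj] at hz
        obtain ⟨u, v, -, hu, hv⟩ := hz
        exact ⟨s(u, v), Set.mem_univ _, by rw [Sym2.map_pair_eq, hu, hv]⟩
    exact ((Set.finite_univ).image _).subset hsub
  · -- clique-freeness
    intro s hs
    rw [SimpleGraph.isNClique_map_iff (by omega)] at hs
    obtain ⟨s', hs', -⟩ := hs
    exact build_cliqueFree hq0 N t0 (by omega) L hLne s' hs'
  · -- Ramsey property
    intro φ hfree
    set ψ : Sym2 P.V → Fin q := fun z => φ (Sym2.map fe z) with hψ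
    obtain ⟨e, hpairs⟩ := build_mono hq0 N t0 L ψ
    have hNt0 : t0 ≤ (Finset.univ : Finset (Fin N)).card := by
      rw [Finset.card_univ, Fintype.card_fin, hN]
      exact le_max_right _ _
    have hTT : ∀ D : Finset (Fin N), D.card ≤ t0 → ∃ T, D ⊆ T ∧ T.card = t0 := by
      intro D hD
      obtain ⟨T, h1, -, h3'⟩ :=
        Finset.exists_subsuperset_card_eq (Finset.subset_univ D) hD hNt0
      exact ⟨T, h1, h3'⟩
    set TT : Finset (Fin N) → Finset (Fin N) := fun D =>
      if h : D.card ≤ t0 then (hTT D h).choose else ∅ with hTTdef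
    have hTTsub : ∀ D (h : D.card ≤ t0), D ⊆ TT D ∧ (TT D).card = t0 := by
      intro D h
      rw [hTTdef]
      simp only [dif_pos h]
      exact (hTT D h).choose_spec
    set ν : Finset (Fin N) → Fin N → ℕ := fun T x =>
      if h : T.card = t0 ∧ x ∈ T then fe (e.f ⟨(T, x), h.1, h.2⟩) else 0 with hνdef
    have hν : ∀ T x (h1 : T.card = t0) (h2 : x ∈ T),
        ν T x = fe (e.f ⟨(T, x), h1, h2⟩) := by
      intro T x h1 h2
      rw [hνdef]
      simp only [dif_pos (And.intro h1 h2)]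
    have hkey : ∀ (x y : Fin N), x ≠ y → ∃ c : Fin q,
        ∀ T (hT : T.card = t0) (hx : x ∈ T) (hy : y ∈ T), φ s(ν T x, ν T y) = c := by
      intro x y hxy
      obtain ⟨c, hc⟩ := hpairs (x, y) (hLmem x y hxy)
      refine ⟨c, fun T hT hx hy => ?_⟩
      have hadj : (base N t0).G.Adj ⟨(T, x), hT, hx⟩ ⟨(T, y), hT, hy⟩ := by
        erw [base_adj]
        exact ⟨fun h => hxy (congrArg (fun z => z.1.2) h), rfl⟩
      have hthis := hc _ _ hadj rfl rfl
      rw [hν T x hT hx, hν T y hT hy]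
      simp only [hψ] at hthis
      rwa [Sym2.map_pair_eq] at hthis
    choose cOf hcOf using hkey
    set χ : Fin N → Fin N → Fin q :=
      fun x y => φ s(ν (TT {x, y}) x, ν (TT {x, y}) y) with hχ
    have hχsym : ∀ x y, χ x y = χ y x := by
      intro x y
      simp only [hχ]
      rw [Finset.pair_comm x y, Sym2.eq_swap]
    obtain ⟨i, S, -, hScard, hSmono⟩ := hN₀ (Fin N) Finset.univ χ
      (by rw [Finset.card_univ, Fintype.card_fin, hN]; exact le_max_left _ _) hχsym
    have hStle : S.card ≤ t0 := by rw [hScard]; exact hti i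
    obtain ⟨hTsub, hTcard⟩ := hTTsub S hStle
    have hpair2 : ∀ x y : Fin N, ({x, y} : Finset (Fin N)).card ≤ t0 := by
      intro x y
      have h1 := Finset.card_insert_le x ({y} : Finset (Fin N))
      rw [Finset.card_singleton] at h1
      omega
    have hedge : ∀ x ∈ S, ∀ y ∈ S, x ≠ y → φ s(ν (TT S) x, ν (TT S) y) = i := by
      intro x hx y hy hxy
      have h1 := hcOf x y hxy (TT S) hTcard (hTsub hx) (hTsub hy)
      have h2 := hcOf x y hxy (TT {x, y}) ((hTTsub _ (hpair2 x y)).2)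
        ((hTTsub _ (hpair2 x y)).1 (by simp)) ((hTTsub _ (hpair2 x y)).1 (by simp))
      have h3 : χ x y = i := hSmono x hx y hy hxy
      simp only [hχ] at h3
      exact h1.trans (h2.symm.trans h3)
    have hinjS : Set.InjOn (fun x => ν (TT S) x) ↑S := by
      intro x hx y hy hxy
      by_contra hne
      have hxy' : ν (TT S) x = ν (TT S) y := hxy
      rw [hν (TT S) x hTcard (hTsub hx), hν (TT S) y hTcard (hTsub hy)] at hxy'
      have heq := e.inj (fe.injective hxy')
      exact hne (congrArg (fun z => z.1.2) heq)
    have hclique : (colorSub (P.G.map fe) φ i).IsNClique (t i)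
        (S.image (fun x => ν (TT S) x)) := by
      constructor
      · rw [SimpleGraph.isClique_iff]
        intro w1 hw1 w2 hw2 hne
        obtain ⟨x, hx, rfl⟩ := Finset.mem_image.mp (Finset.mem_coe.mp hw1)
        obtain ⟨y, hy, rfl⟩ := Finset.mem_image.mp (Finset.mem_coe.mp hw2)
        have hxy : x ≠ y := fun h => hne (by rw [h])
        show (SimpleGraph.fromEdgeSet _).Adj _ _
        rw [SimpleGraph.fromEdgeSet_adj]
        refine ⟨⟨?_, hedge x hx y hy hxy⟩, hne⟩
        rw [SimpleGraph.mem_edgeSet, SimpleGraph.map_adj]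
        refine ⟨e.f ⟨(TT S, x), hTcard, hTsub hx⟩, e.f ⟨(TT S, y), hTcard, hTsub hy⟩,
          ?_, ?_, ?_⟩
        · apply e.adjMap
          erw [base_adj]
          exact ⟨fun h => hxy (congrArg (fun z => z.1.2) h), rfl⟩
        · exact (hν (TT S) x hTcard (hTsub hx)).symm
        · exact (hν (TT S) y hTcard (hTsub hy)).symm
      · rw [Finset.card_image_of_injOn hinjS, hScard]
    exact hfree i _ hclique

end RamseyGadgets
end

section
/- Let q ≥ 2, let 𝒯 = (K_{t_1},…,K_{t_q}) with t_1 ≥ … ≥ t_q ≥ 3, and let X be a nonempty subset of {1,…,q}. Then every X-determiner for 𝒯 is safe. -/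
open SimpleGraph

namespace RamseyGadgets

variable {q : ℕ}

lemma colorSub_anti {G H : SimpleGraph ℕ} (h : G ≤ H) (φ : Sym2 ℕ → Fin q) (i : Fin q) :
    colorSub G φ i ≤ colorSub H φ i :=
  SimpleGraph.fromEdgeSet_mono fun _ hx => ⟨SimpleGraph.edgeSet_mono h hx.1, hx.2⟩

/-- For a tuple of cliques `(K_{t_1}, …, K_{t_q})` with `q ≥ 2` and
`t_1 ≥ … ≥ t_q ≥ 3`, every `X`-determiner is safe. -/
theorem all_determiners_safe (q : ℕ) (hq : 2 ≤ q) (t : Fin q → ℕ)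
    (hmono : Antitone t) (h3 : ∀ i, 3 ≤ t i)
    (X : Set (Fin q)) (hX : X.Nonempty)
    (R : SimpleGraph ℕ) (e : Sym2 ℕ) (hdet : IsDeterminer t X R e) :
    IsSafeDeterminer t X R e := by
  classical
  obtain ⟨hfin, hedge, hnr, hcm, hec⟩ := hdet
  refine ⟨hfin, hedge, hnr, hcm, ?_⟩
  intro c hc
  obtain ⟨φ, hφ, hφe⟩ := hec c hc
  refine ⟨φ, hφ, hφe, ?_⟩
  rintro G hGfin f ι ⟨hf, hef, hsupp⟩ ψ hext
  constructor
  · intro h i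
    exact (h i).anti (colorSub_anti le_sup_left ψ i)
  · intro hG i
    by_contra hcf
    rw [SimpleGraph.CliqueFree] at hcf
    push_neg at hcf
    obtain ⟨K, hK⟩ := hcf
    have hψf : ψ f = φ e := by rw [← hef]; exact hext e hedge
    -- Claim B: vertices of the copy of `R` lying in `G` come from the signal edge.
    have hB : ∀ v ∈ R.support, ι v ∈ G.support → v ∈ e := by
      intro v hv hG'
      by_contra hne
      exact hsupp v hv hne hG'
    -- adjacency in the big colored subgraph
    have hadj : ∀ u w, (colorSub (G ⊔ R.map ι) ψ i).Adj u w →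
        (G.Adj u w ∨ (R.map ι).Adj u w) ∧ ψ s(u, w) = i := by
      intro u w h
      rw [colorSub, SimpleGraph.fromEdgeSet_adj] at h
      exact ⟨(SimpleGraph.sup_adj _ _ _ _).mp ((SimpleGraph.mem_edgeSet _).mp h.1.1), h.1.2⟩
    have hcard : 3 ≤ K.card := hK.2 ▸ h3 i
    -- each vertex of K is in the support of G or in the copy of R
    have hmem : ∀ u ∈ K, u ∈ G.support ∨ u ∈ ι '' R.support := by
      intro u hu
      obtain ⟨w, hw, hwu⟩ := Finset.exists_mem_ne (s := K) (by omega) u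
      have h := hadj u w (hK.1 hu hw hwu.symm)
      rcases h.1 with h | h
      · left; exact ⟨w, h⟩
      · right
        rw [SimpleGraph.map_adj] at h
        obtain ⟨a, b, hab, ha, hb⟩ := h
        exact ⟨a, ⟨b, hab⟩, ha⟩
    by_cases hcase : ∀ u ∈ K, u ∈ ι '' R.support
    · -- pull the clique back into R
      have hKrange : ∀ u ∈ K, u ∈ Set.range ι := fun u hu => by
        obtain ⟨a, _, ha⟩ := hcase u hu; exact ⟨a, ha⟩
      set K' : Finset ℕ := K.preimage ι (ι.injective.injOn) with hK'def
      have himg : Finset.image ι K' = K := by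
        rw [hK'def, Finset.image_preimage]
        exact Finset.filter_true_of_mem hKrange
      have hKsupp : ∀ a, ι a ∈ K → a ∈ R.support := by
        intro a ha
        obtain ⟨x, hx, hxe⟩ := hcase (ι a) ha
        exact (ι.injective hxe) ▸ hx
      have : (colorSub R φ i).IsNClique (t i) K' := by
        constructor
        · intro a ha b hb hneab
          have haK : ι a ∈ K := Finset.mem_preimage.mp ha
          have hbK : ι b ∈ K := Finset.mem_preimage.mp hb
          have h := hadj (ι a) (ι b) ((hK.1 haK hbK) (ι.injective.ne hneab))
          rw [colorSub, SimpleGraph.fromEdgeSet_adj]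
          refine ⟨⟨?_, ?_⟩, hneab⟩ <;> rcases h.1 with h1 | h1
          · -- a G-edge inside the copy: must be the signal edge
            have hae : a ∈ e := hB a (hKsupp a haK) ⟨ι b, h1⟩
            have hbe : b ∈ e := hB b (hKsupp b hbK) ⟨ι a, h1.symm⟩
            have : e = s(a, b) := (Sym2.mem_and_mem_iff hneab).mp ⟨hae, hbe⟩
            exact this ▸ hedge
          · rw [SimpleGraph.map_adj] at h1
            obtain ⟨a', b', hab, ha', hb'⟩ := h1
            have hab2 : R.Adj a b := by
              rwa [ι.injective ha', ι.injective hb'] at hab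
            exact (SimpleGraph.mem_edgeSet _).mpr hab2
          · have hae : a ∈ e := hB a (hKsupp a haK) ⟨ι b, h1⟩
            have hbe : b ∈ e := hB b (hKsupp b hbK) ⟨ι a, h1.symm⟩
            have heq : e = s(a, b) := (Sym2.mem_and_mem_iff hneab).mp ⟨hae, hbe⟩
            have : φ s(a, b) = ψ f := by rw [← heq, ← hψf]
            rw [this, ← hef, heq, Sym2.map_pair_eq]
            exact h.2
          · rw [SimpleGraph.map_adj] at h1
            obtain ⟨a', b', hab, ha', hb'⟩ := h1
            have hab2 : R.Adj a b := by
              rwa [ι.injective ha', ι.injective hb'] at hab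
            have := hext s(a, b) ((SimpleGraph.mem_edgeSet _).mpr hab2)
            rw [this.symm, Sym2.map_pair_eq]
            exact h.2
        · have := Finset.card_image_of_injective K' ι.injective
          rw [himg] at this
          rw [← this, hK.2]
      exact (hφ i) K' this
    · -- all vertices lie in G
      push_neg at hcase
      obtain ⟨u, hu, huR⟩ := hcase
      have huG : u ∈ G.support := (hmem u hu).resolve_right huR
      have hallG : ∀ w ∈ K, w ∈ G.support := by
        intro w hw
        rcases hmem w hw with h | h
        · exact h
        · by_contra hwG
          have hne : u ≠ w := by rintro rfl; exact hwG huG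
          have h2 := hadj u w ((hK.1 hu hw) hne)
          rcases h2.1 with h3 | h3
          · exact hwG ⟨u, h3.symm⟩
          · rw [SimpleGraph.map_adj] at h3
            obtain ⟨a, b, hab, ha, hb⟩ := h3
            exact huR ⟨a, ⟨b, hab⟩, ha⟩
      have : (colorSub G ψ i).IsNClique (t i) K := by
        refine ⟨?_, hK.2⟩
        intro a ha b hb hneab
        have h := hadj a b ((hK.1 ha hb) hneab)
        rw [colorSub, SimpleGraph.fromEdgeSet_adj]
        refine ⟨⟨?_, h.2⟩, hneab⟩
        rcases h.1 with h1 | h1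
        · exact (SimpleGraph.mem_edgeSet _).mpr h1
        · rw [SimpleGraph.map_adj] at h1
          obtain ⟨a', b', hab, ha', hb'⟩ := h1
          have ha'e : a' ∈ e := hB a' ⟨b', hab⟩ (ha' ▸ hallG a ha)
          have hb'e : b' ∈ e := hB b' ⟨a', hab.symm⟩ (hb' ▸ hallG b hb)
          have heq : e = s(a', b') := (Sym2.mem_and_mem_iff hab.ne).mp ⟨ha'e, hb'e⟩
          have : s(a, b) = f := by rw [← hef, heq, Sym2.map_pair_eq, ha', hb']
          exact this ▸ hf
      exact (hG i) K this

end RamseyGadgets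
end

section
/- Let q ≥ 2 and let 𝒯 = (K_{t_1},…,K_{t_q}) with t_1 ≥ … ≥ t_q ≥ 3. If S is a negative or positive X-sender for 𝒯 (for some X ⊆ {1,…,q}) whose two signal edges are at distance at least three from each other, then S is safe. -/
open SimpleGraph

namespace RamseyGadgets

variable {q : ℕ}

lemma colorSub_adj (G : SimpleGraph ℕ) (φ : Sym2 ℕ → Fin q) (i : Fin q) (x y : ℕ) :
    (colorSub G φ i).Adj x y ↔ G.Adj x y ∧ φ s(x, y) = i := by
  simp only [colorSub, fromEdgeSet_adj, Set.mem_setOf_eq, mem_edgeSet]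
  exact ⟨fun h => h.1, fun h => ⟨h, h.1.ne⟩⟩

/-- For a tuple of cliques `(K_{t_1}, …, K_{t_q})` with `q ≥ 2` and
`t_1 ≥ … ≥ t_q ≥ 3`, every (positive or negative) `X`-sender whose signal edges are at
distance at least three from each other is safe. -/
theorem senders_far_apart_safe (q : ℕ) (hq : 2 ≤ q) (t : Fin q → ℕ)
    (hmono : Antitone t) (h3 : ∀ i, 3 ≤ t i)
    (X : Set (Fin q)) (pos : Bool)
    (S : SimpleGraph ℕ) (e f : Sym2 ℕ) (hsend : IsSender t pos X S e f)
    (hdist : ∀ p r : ℕ, p ∈ e → r ∈ f → ∀ w : S.Walk p r, 3 ≤ w.length) :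
    IsSafeSender t pos X S e f := by
  obtain ⟨hfin, he, hf, hne, hnr, hcm, hex⟩ := hsend
  have hSne : ∀ {p r : ℕ}, p ∈ e → r ∈ f → ¬ S.Adj p r := by
    intro p r hp hr hadj
    have := hdist p r hp hr (SimpleGraph.Walk.cons hadj SimpleGraph.Walk.nil)
    simp [SimpleGraph.Walk.length_cons] at this
  have hS2 : ∀ {p u r : ℕ}, p ∈ e → r ∈ f → S.Adj u p → S.Adj u r → False := by
    intro p u r hp hr h1 h2
    have := hdist p r hp hr
      (SimpleGraph.Walk.cons h1.symm (SimpleGraph.Walk.cons h2 SimpleGraph.Walk.nil))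
    simp [SimpleGraph.Walk.length_cons] at this
  refine ⟨hfin, he, hf, hne, hnr, hcm, ?_⟩
  intro c₁ c₂ hc₁ hc₂ hcc
  obtain ⟨φ, hφ, hφe, hφf⟩ := hex c₁ c₂ hc₁ hc₂ hcc
  refine ⟨φ, hφ, hφe, hφf, ?_⟩
  rintro G hGfin a b ι ⟨haG, hbG, hea, hfb, hdisj⟩ ψ hext
  set C := S.map ι with hC
  -- a vertex of the copy lying in G comes from an endpoint of e or f
  have hsupp : ∀ x, x ∈ C.support → x ∈ G.support → ∃ p, (p ∈ e ∨ p ∈ f) ∧ ι p = x := by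
    intro x hxC hxG
    obtain ⟨y, hxy⟩ := (mem_support _).1 hxC
    obtain ⟨u, v, huv, hu, hv⟩ := (map_adj ι S x y).1 hxy
    by_cases hue : u ∈ e
    · exact ⟨u, Or.inl hue, hu⟩
    by_cases huf : u ∈ f
    · exact ⟨u, Or.inr huf, hu⟩
    exact absurd hxG (hu ▸ hdisj u ((mem_support _).2 ⟨v, huv⟩) hue huf)
  -- no cross edges in the copy
  have hcross : ∀ {x y : ℕ}, (∃ p, p ∈ e ∧ ι p = x) → (∃ r, r ∈ f ∧ ι r = y) →
      ¬ C.Adj x y := by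
    rintro x y ⟨p, hp, rfl⟩ ⟨r, hr, rfl⟩ hadj
    obtain ⟨u, v, huv, hu, hv⟩ := (map_adj ι S _ _).1 hadj
    rw [ι.injective hu, ι.injective hv] at huv
    exact hSne hp hr huv
  -- same-side pairs give the edges a, b
  have hsame_e : ∀ {x y : ℕ}, x ≠ y → (∃ p, p ∈ e ∧ ι p = x) → (∃ r, r ∈ e ∧ ι r = y) →
      s(x, y) = a := by
    rintro x y hxy ⟨p, hp, rfl⟩ ⟨r, hr, rfl⟩
    have hpr : p ≠ r := fun h => hxy (by rw [h])
    have hE : e = s(p, r) := (Sym2.mem_and_mem_iff hpr).1 ⟨hp, hr⟩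
    rw [← hea, hE, Sym2.map_pair_eq]
  have hsame_f : ∀ {x y : ℕ}, x ≠ y → (∃ p, p ∈ f ∧ ι p = x) → (∃ r, r ∈ f ∧ ι r = y) →
      s(x, y) = b := by
    rintro x y hxy ⟨p, hp, rfl⟩ ⟨r, hr, rfl⟩
    have hpr : p ≠ r := fun h => hxy (by rw [h])
    have hE : f = s(p, r) := (Sym2.mem_and_mem_iff hpr).1 ⟨hp, hr⟩
    rw [← hfb, hE, Sym2.map_pair_eq]
  -- a and b are edges of the copy
  have haC : a ∈ C.edgeSet := by
    rw [← hea]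
    obtain ⟨p, r, rfl⟩ : ∃ p r, e = s(p, r) := by
      induction e using Sym2.ind with | _ x y => exact ⟨x, y, rfl⟩
    rw [Sym2.map_pair_eq, mem_edgeSet]
    exact (map_adj ι S _ _).2 ⟨p, r, (mem_edgeSet _).1 he, rfl, rfl⟩
  have hbC : b ∈ C.edgeSet := by
    rw [← hfb]
    obtain ⟨p, r, rfl⟩ : ∃ p r, f = s(p, r) := by
      induction f using Sym2.ind with | _ x y => exact ⟨x, y, rfl⟩
    rw [Sym2.map_pair_eq, mem_edgeSet]
    exact (map_adj ι S _ _).2 ⟨p, r, (mem_edgeSet _).1 hf, rfl, rfl⟩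
  -- a pair of vertices coming from endpoints of e, f that is adjacent in G ⊔ C is adjacent in G
  have hTtoG : ∀ x y : ℕ, x ≠ y → (∃ p, (p ∈ e ∨ p ∈ f) ∧ ι p = x) →
      (∃ r, (r ∈ e ∨ r ∈ f) ∧ ι r = y) → G.Adj x y ∨ C.Adj x y → G.Adj x y := by
    rintro x y hxy ⟨p, hp, hpx⟩ ⟨r, hr, hry⟩ hor
    rcases hp with hp | hp <;> rcases hr with hr | hr
    · have := hsame_e hxy ⟨p, hp, hpx⟩ ⟨r, hr, hry⟩
      rw [← mem_edgeSet, this]; exact haG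
    · exact hor.resolve_right (hcross ⟨p, hp, hpx⟩ ⟨r, hr, hry⟩)
    · exact hor.resolve_right fun h => hcross ⟨r, hr, hry⟩ ⟨p, hp, hpx⟩ h.symm
    · have := hsame_f hxy ⟨p, hp, hpx⟩ ⟨r, hr, hry⟩
      rw [← mem_edgeSet, this]; exact hbG
  -- the copy is free: pull back to S
  have hCfree : ∀ i : Fin q, (colorSub C ψ i).CliqueFree (t i) := by
    intro i
    have hle : colorSub C ψ i ≤ (colorSub S φ i).map ι := by
      intro x y hxy
      rw [colorSub_adj] at hxy
      obtain ⟨hadj, hcol⟩ := hxy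
      obtain ⟨u, v, huv, hu, hv⟩ := (map_adj ι S x y).1 hadj
      refine (map_adj ι _ x y).2 ⟨u, v, ?_, hu, hv⟩
      rw [colorSub_adj]
      refine ⟨huv, ?_⟩
      have hψ := hext s(u, v) ((mem_edgeSet _).2 huv)
      rw [Sym2.map_pair_eq, hu, hv] at hψ
      rw [← hψ]; exact hcol
    exact ((cliqueFree_map_iff.2 (hφ i)).anti hle)
  constructor
  · intro hU i
    refine (hU i).anti ?_
    intro x y hxy
    rw [colorSub_adj] at hxy ⊢
    exact ⟨(sup_adj _ _ _ _).2 (Or.inl hxy.1), hxy.2⟩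
  · intro hGfree i
    intro K hK
    obtain ⟨hclq, hcard⟩ := hK
    have hadj2 : ∀ x ∈ K, ∀ y ∈ K, x ≠ y → (G.Adj x y ∨ C.Adj x y) ∧ ψ s(x, y) = i := by
      intro x hx y hy hxy
      have h := hclq (Finset.mem_coe.mpr hx) (Finset.mem_coe.mpr hy) hxy
      rw [colorSub_adj] at h; rw [sup_adj] at h
      exact h
    have hdich : (∀ x ∈ K, ∀ y ∈ K, x ≠ y → G.Adj x y) ∨
        (∀ x ∈ K, ∀ y ∈ K, x ≠ y → C.Adj x y) := by
      by_cases hall : ∀ x ∈ K, x ∈ C.support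
      · by_cases hallC : ∀ x ∈ K, ∀ y ∈ K, x ≠ y → C.Adj x y
        · exact Or.inr hallC
        · push_neg at hallC
          obtain ⟨u, hu, v, hv, huv, hnadj⟩ := hallC
          have hGuv : G.Adj u v := ((hadj2 u hu v hv huv).1).resolve_right hnadj
          obtain ⟨p, hp, hpu⟩ := hsupp u (hall u hu) ((mem_support _).2 ⟨v, hGuv⟩)
          obtain ⟨r, hr, hrv⟩ := hsupp v (hall v hv) ((mem_support _).2 ⟨u, hGuv.symm⟩)
          -- key: all of K comes from endpoints of e and f
          have key : ∀ u' v' : ℕ, u' ∈ K → v' ∈ K → u' ≠ v' → ∀ p' r' : ℕ, p' ∈ e → r' ∈ f →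
              ι p' = u' → ι r' = v' → ∀ w ∈ K, ∃ s', (s' ∈ e ∨ s' ∈ f) ∧ ι s' = w := by
            intro u' v' hu' hv' huv' p' r' hp' hr' hpu' hrv' w hw
            by_cases hwu : w = u'
            · exact ⟨p', Or.inl hp', hwu ▸ hpu'⟩
            by_cases hwv : w = v'
            · exact ⟨r', Or.inr hr', hwv ▸ hrv'⟩
            by_cases hwG : w ∈ G.support
            · exact hsupp w (hall w hw) hwG
            · exfalso
              have h1 : C.Adj w u' := by
                refine ((hadj2 w hw u' hu' hwu).1).resolve_left fun h => ?_
                exact hwG ((mem_support _).2 ⟨u', h⟩)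
              have h2 : C.Adj w v' := by
                refine ((hadj2 w hw v' hv' hwv).1).resolve_left fun h => ?_
                exact hwG ((mem_support _).2 ⟨v', h⟩)
              obtain ⟨w₁, u₁, hw1, hwe, hue⟩ := (map_adj ι S _ _).1 h1
              obtain ⟨w₂, v₁, hw2, hwe2, hve⟩ := (map_adj ι S _ _).1 h2
              have e1 : u₁ = p' := ι.injective (by rw [hue, hpu'])
              have e2 : v₁ = r' := ι.injective (by rw [hve, hrv'])
              have e3 : w₂ = w₁ := ι.injective (by rw [hwe2, hwe])
              exact hS2 hp' hr' (e1 ▸ hw1) (e3 ▸ e2 ▸ hw2)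
          have hKT : ∀ w ∈ K, ∃ s', (s' ∈ e ∨ s' ∈ f) ∧ ι s' = w := by
            rcases hp with hp | hp <;> rcases hr with hr | hr
            · exfalso
              exact hnadj ((mem_edgeSet _).1 (by
                rw [hsame_e huv ⟨p, hp, hpu⟩ ⟨r, hr, hrv⟩]; exact haC))
            · exact key u v hu hv huv p r hp hr hpu hrv
            · exact key v u hv hu huv.symm r p hr hp hrv hpu
            · exfalso
              exact hnadj ((mem_edgeSet _).1 (by
                rw [hsame_f huv ⟨p, hp, hpu⟩ ⟨r, hr, hrv⟩]; exact hbC))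
          refine Or.inl fun x hx y hy hxy => ?_
          exact hTtoG x y hxy (hKT x hx) (hKT y hy) (hadj2 x hx y hy hxy).1
      · push_neg at hall
        obtain ⟨w, hw, hwC⟩ := hall
        refine Or.inl fun x hx y hy hxy => ?_
        rcases (hadj2 x hx y hy hxy).1 with h | h
        · exact h
        · -- x, y are in the copy's support, hence distinct from w
          have hxC : x ∈ C.support := (mem_support _).2 ⟨y, h⟩
          have hyC : y ∈ C.support := (mem_support _).2 ⟨x, h.symm⟩
          have hxw : x ≠ w := fun hh => hwC (hh ▸ hxC)
          have hyw : y ≠ w := fun hh => hwC (hh ▸ hyC)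
          have hGx : G.Adj w x := ((hadj2 w hw x hx hxw.symm).1).resolve_right
            (fun hh => hwC ((mem_support _).2 ⟨x, hh⟩))
          have hGy : G.Adj w y := ((hadj2 w hw y hy hyw.symm).1).resolve_right
            (fun hh => hwC ((mem_support _).2 ⟨y, hh⟩))
          exact hTtoG x y hxy (hsupp x hxC ((mem_support _).2 ⟨w, hGx.symm⟩))
            (hsupp y hyC ((mem_support _).2 ⟨w, hGy.symm⟩)) (Or.inr h)
    rcases hdich with hL | hR
    · refine hGfree i K ⟨?_, hcard⟩
      intro x hx y hy hxy
      rw [colorSub_adj]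
      exact ⟨hL x (Finset.mem_coe.mp hx) y (Finset.mem_coe.mp hy) hxy,
        (hadj2 x (Finset.mem_coe.mp hx) y (Finset.mem_coe.mp hy) hxy).2⟩
    · refine hCfree i K ⟨?_, hcard⟩
      intro x hx y hy hxy
      rw [colorSub_adj]
      exact ⟨hR x (Finset.mem_coe.mp hx) y (Finset.mem_coe.mp hy) hxy,
        (hadj2 x (Finset.mem_coe.mp hx) y (Finset.mem_coe.mp hy) hxy).2⟩


end RamseyGadgets
end

section
/- Let q ≥ 2 and let 𝒯 = (K_{t_1},…,K_{t_q}) be a q-tuple of complete graphs with t_1 ≥ … ≥ t_q ≥ 3. Let G_1 and G_2 be graphs on disjoint vertex sets, and for each i ∈ {1,2} let a_i, b_i, c_i be vertices of G_i such that a_i b_i and b_i c_i are edges of G_i but a_i c_i is not an edge of G_i. Let G be the simple graph obtained from the disjoint union of G_1 and G_2 by identifying a_1 with a_2, b_1 with b_2, and c_1 with c_2. Then a q-coloring φ of G is 𝒯-free if and only if the restrictions of φ to the edges of G_1 and to the edges of G_2 are both 𝒯-free. -/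
open SimpleGraph

namespace RamseyGadgets

variable {q : ℕ}

lemma clique_in_part {q : ℕ} (t : Fin q → ℕ) (i : Fin q) (G₁ G₂ : SimpleGraph ℕ)
    (a b c : ℕ) (hsupp : G₁.support ∩ G₂.support ⊆ {a, b, c})
    (hab₁ : G₁.Adj a b) (hbc₁ : G₁.Adj b c) (hac₂ : ¬ G₂.Adj a c)
    (φ : Sym2 ℕ → Fin q) (K : Finset ℕ)
    (hK : (colorSub (G₁ ⊔ G₂) φ i).IsNClique (t i) K)
    (hsub : ∀ v ∈ K, v ∈ G₁.support) :
    (colorSub G₁ φ i).IsNClique (t i) K := by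
  refine ⟨fun u hu v hv huv => ?_, hK.card_eq⟩
  have hadj := hK.isClique hu hv huv
  simp only [colorSub, fromEdgeSet_adj, Set.mem_setOf_eq, mem_edgeSet, sup_adj] at hadj ⊢
  obtain ⟨⟨hmem, hcol⟩, hne⟩ := hadj
  refine ⟨⟨?_, hcol⟩, hne⟩
  rcases hmem with h1 | h2
  · exact h1
  · -- edge lies in G₂; both endpoints are in both supports, hence in {a, b, c}
    have hu1 : u ∈ G₁.support := hsub u hu
    have hv1 : v ∈ G₁.support := hsub v hv
    have hu2 : u ∈ G₂.support := ⟨v, h2⟩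
    have hv2 : v ∈ G₂.support := ⟨u, h2.symm⟩
    have hu3 : u = a ∨ u = b ∨ u = c := hsupp ⟨hu1, hu2⟩
    have hv3 : v = a ∨ v = b ∨ v = c := hsupp ⟨hv1, hv2⟩
    rcases hu3 with rfl | rfl | rfl <;> rcases hv3 with rfl | rfl | rfl
    · exact absurd rfl hne
    · exact hab₁
    · exact absurd h2 hac₂
    · exact hab₁.symm
    · exact absurd rfl hne
    · exact hbc₁
    · exact absurd h2.symm hac₂
    · exact hbc₁.symm
    · exact absurd rfl hne

/-- Let `𝒯 = (K_{t_1}, …, K_{t_q})` with `q ≥ 2` and `t_1 ≥ … ≥ t_q ≥ 3`.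
Let `G₁` and `G₂` be graphs sharing only the vertices `a`, `b`, `c`, where in each graph
`ab` and `bc` are edges but `ac` is not (this models the identification of `a₁, b₁, c₁`
with `a₂, b₂, c₂` starting from disjoint vertex sets). Then a coloring of `G₁ ⊔ G₂` is
`𝒯`-free if and only if it restricts to `𝒯`-free colorings of both `G₁` and `G₂`. -/
theorem free_coloring_of_glued (q : ℕ) (hq : 2 ≤ q) (t : Fin q → ℕ)
    (hmono : Antitone t) (h3 : ∀ i, 3 ≤ t i)
    (G₁ G₂ : SimpleGraph ℕ) (hfin₁ : G₁.edgeSet.Finite) (hfin₂ : G₂.edgeSet.Finite)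
    (a b c : ℕ) (hac : a ≠ c)
    (hsupp : G₁.support ∩ G₂.support ⊆ {a, b, c})
    (hab₁ : G₁.Adj a b) (hbc₁ : G₁.Adj b c) (hac₁ : ¬ G₁.Adj a c)
    (hab₂ : G₂.Adj a b) (hbc₂ : G₂.Adj b c) (hac₂ : ¬ G₂.Adj a c)
    (φ : Sym2 ℕ → Fin q) :
    FreeColoring t (G₁ ⊔ G₂) φ ↔ (FreeColoring t G₁ φ ∧ FreeColoring t G₂ φ) := by
  constructor
  · intro h
    have hle : ∀ G : SimpleGraph ℕ, G ≤ G₁ ⊔ G₂ →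
        ∀ i, colorSub G φ i ≤ colorSub (G₁ ⊔ G₂) φ i := by
      intro G hG i
      exact fromEdgeSet_mono fun e he => ⟨edgeSet_mono hG he.1, he.2⟩
    exact ⟨fun i => (h i).anti (hle G₁ le_sup_left i),
           fun i => (h i).anti (hle G₂ le_sup_right i)⟩
  · rintro ⟨h1, h2⟩ i K hK
    by_cases hall : ∀ v ∈ K, v ∈ G₁.support
    · exact h1 i K (clique_in_part t i G₁ G₂ a b c hsupp hab₁ hbc₁ hac₂ φ K hK hall)
    · push_neg at hall
      obtain ⟨u, huK, hu1⟩ := hall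
      have hcard' : 1 < K.card := by
        rw [hK.card_eq]; have := h3 i; omega
      have hall2 : ∀ v ∈ K, v ∈ G₂.support := by
        intro v hv
        by_cases hvu : v = u
        · subst hvu
          obtain ⟨w, hwK, hwv⟩ := Finset.exists_mem_ne hcard' v
          have hadj := hK.isClique hv hwK (by exact fun hvw => hwv hvw.symm)
          simp only [colorSub, fromEdgeSet_adj, Set.mem_setOf_eq, mem_edgeSet,
            sup_adj] at hadj
          rcases hadj.1.1 with h1' | h2'
          · exact absurd ⟨w, h1'⟩ hu1
          · exact ⟨w, h2'⟩
        · have hadj := hK.isClique hv huK hvu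
          simp only [colorSub, fromEdgeSet_adj, Set.mem_setOf_eq, mem_edgeSet,
            sup_adj] at hadj
          rcases hadj.1.1 with h1' | h2'
          · exact absurd ⟨v, h1'.symm⟩ hu1
          · exact ⟨u, h2'⟩
      have hsupp' : G₂.support ∩ G₁.support ⊆ {a, b, c} := by
        rw [Set.inter_comm]; exact hsupp
      have hK' : (colorSub (G₂ ⊔ G₁) φ i).IsNClique (t i) K := by
        rwa [sup_comm] at hK
      exact h2 i K (clique_in_part t i G₂ G₁ a b c hsupp' hab₂ hbc₂ hac₁ φ K hK' hall2)

end RamseyGadgets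
end
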